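/- arXiv:1602.08701 — 2 statements merged into one kernel-verified Lean document; each statement's English description precedes it below -/
import Mathlib

section
/- Let X and Y be real inner product spaces, let j : X → Y be a linear map for which there is a constant C_P ≥ 0 with ‖jx‖_Y ≤ C_P‖x‖_X for all x ∈ X, and let G : Y → ℝ be differentiable with derivative satisfying the semi-monotonicity condition (DG(y₁) − DG(y₂))[y₁ − y₂] ≥ −μ‖y₁ − y₂‖²_Y for all y₁, y₂ ∈ Y and some constant μ ≥ 0. If μ C_P² ≤ 1, then the functional F : X → ℝ defined by F(x) = ½‖x‖²_X + G(jx) is convex. -/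
/-!
The derivative of `F` is `x ↦ ⟪x, ·⟫ + DG(jx) ∘ j`. Along `d = x₁ - x₂` the first term contributes
`‖d‖²`, while the second is at least `-μ‖jd‖² ≥ -μ C_P² ‖d‖² ≥ -‖d‖²`, so `DF` is monotone.
A differentiable function with monotone derivative is convex, since its restriction to each line
has a nondecreasing derivative.
-/

open Set
open scoped RealInnerProductSpace

section MonotoneDerivative

variable {E : Type*} [NormedAddCommGroup E] [NormedSpace ℝ E] {f : E → ℝ}

theorem convexOn_univ_of_forall_convexOn_univ_line
    (h : ∀ x v : E, ConvexOn ℝ univ fun t : ℝ => f (x + t • v)) : ConvexOn ℝ univ f := by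
  refine ⟨convex_univ, fun x _ y _ a b ha hb hab => ?_⟩
  have hline := (h x (y - x)).2 (mem_univ 0) (mem_univ 1) ha hb hab
  obtain rfl : a = 1 - b := by linarith
  simp only [smul_eq_mul, mul_zero, mul_one, zero_add, zero_smul, add_zero, one_smul,
    add_sub_cancel] at hline
  rwa [smul_eq_mul, smul_eq_mul, show (1 - b) • x + b • y = x + b • (y - x) by module]

theorem convexOn_univ_of_hasFDerivAt_of_monotone {f' : E → E →L[ℝ] ℝ}
    (hf : ∀ x, HasFDerivAt f (f' x) x) (hmono : ∀ x y, 0 ≤ (f' x - f' y) (x - y)) :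
    ConvexOn ℝ univ f := by
  refine convexOn_univ_of_forall_convexOn_univ_line fun x v => ?_
  have hderiv (t : ℝ) : HasDerivAt (fun t : ℝ => f (x + t • v)) (f' (x + t • v) v) t := by
    have hline : HasDerivAt (fun t : ℝ => x + t • v) v t := by
      simpa using ((hasDerivAt_id t).smul_const v).const_add x
    exact (hf _).comp_hasDerivAt t hline
  refine Monotone.convexOn_univ_of_deriv (fun t => (hderiv t).differentiableAt) fun r s hrs => ?_
  rw [(hderiv r).deriv, (hderiv s).deriv]
  rcases hrs.eq_or_lt with rfl | hlt
  · rfl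
  have hslope := hmono (x + s • v) (x + r • v)
  rw [show x + s • v - (x + r • v) = (s - r) • v by module, map_smul, smul_eq_mul,
    sub_apply] at hslope
  linarith [nonneg_of_mul_nonneg_right hslope (sub_pos.2 hlt)]

end MonotoneDerivative

section SemiMonotone

variable {X Y : Type*}

theorem semimonotone_comp_of_norm_le [SeminormedAddCommGroup X] [NormedSpace ℝ X]
    [SeminormedAddCommGroup Y] [NormedSpace ℝ Y] {j : X →L[ℝ] Y} {C μ : ℝ}
    (hj : ∀ x, ‖j x‖ ≤ C * ‖x‖) {DG : Y → Y →L[ℝ] ℝ} (hμ : 0 ≤ μ)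
    (hmon : ∀ y₁ y₂, (DG y₁ - DG y₂) (y₁ - y₂) ≥ -μ * ‖y₁ - y₂‖ ^ 2) (x₁ x₂ : X) :
    ((DG (j x₁)).comp j - (DG (j x₂)).comp j) (x₁ - x₂) ≥ -(μ * C ^ 2) * ‖x₁ - x₂‖ ^ 2 := by
  have hsq : ‖j (x₁ - x₂)‖ ^ 2 ≤ C ^ 2 * ‖x₁ - x₂‖ ^ 2 := by
    rw [← mul_pow]
    exact pow_le_pow_left₀ (norm_nonneg _) (hj _) 2
  have hmon_j := hmon (j x₁) (j x₂)
  rw [← map_sub] at hmon_j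
  simp only [sub_apply, ContinuousLinearMap.coe_comp, Function.comp_apply] at hmon_j ⊢
  nlinarith [mul_le_mul_of_nonneg_left hsq hμ]

theorem monotone_innerSL_add_of_semimonotone [NormedAddCommGroup X] [InnerProductSpace ℝ X]
    {D : X → X →L[ℝ] ℝ} {κ : ℝ} (hκ : κ ≤ 1)
    (hD : ∀ x₁ x₂, (D x₁ - D x₂) (x₁ - x₂) ≥ -κ * ‖x₁ - x₂‖ ^ 2) (x₁ x₂ : X) :
    0 ≤ ((innerSL ℝ x₁ + D x₁) - (innerSL ℝ x₂ + D x₂)) (x₁ - x₂) := by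
  have hinner : (innerSL ℝ x₁ - innerSL ℝ x₂) (x₁ - x₂) = ‖x₁ - x₂‖ ^ 2 := by
    rw [← map_sub, innerSL_apply_apply, real_inner_self_eq_norm_sq]
  rw [add_sub_add_comm, add_apply, hinner]
  nlinarith [hD x₁ x₂, sq_nonneg ‖x₁ - x₂‖]

end SemiMonotone

theorem hasFDerivAt_norm_sq_div_two {X : Type*} [NormedAddCommGroup X] [InnerProductSpace ℝ X]
    (x : X) : HasFDerivAt (fun x : X => ‖x‖ ^ 2 / 2) (innerSL ℝ x) x := by
  have h := (hasStrictFDerivAt_norm_sq x).hasFDerivAt.const_smul (2⁻¹ : ℝ)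
  convert h using 1 <;> ext <;> simp [div_eq_inv_mul]

theorem convexity_of_regularized_energy_general
    {X Y : Type*} [NormedAddCommGroup X] [InnerProductSpace ℝ X]
    [NormedAddCommGroup Y] [InnerProductSpace ℝ Y]
    (j : X →ₗ[ℝ] Y) (C_P : ℝ) (hj : ∀ x : X, ‖j x‖ ≤ C_P * ‖x‖)
    (G : Y → ℝ) (DG : Y → (Y →L[ℝ] ℝ)) (hG : ∀ y, HasFDerivAt G (DG y) y)
    (μ : ℝ) (hμ : 0 ≤ μ)
    (hmon : ∀ y₁ y₂ : Y, (DG y₁ - DG y₂) (y₁ - y₂) ≥ -μ * ‖y₁ - y₂‖ ^ 2)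
    (hsmall : μ * C_P ^ 2 ≤ 1) :
    ConvexOn ℝ Set.univ (fun x : X => ‖x‖ ^ 2 / 2 + G (j x)) := by
  let jL : X →L[ℝ] Y := j.mkContinuous C_P hj
  have hderiv (x : X) :
      HasFDerivAt (fun x : X => ‖x‖ ^ 2 / 2 + G (j x)) (innerSL ℝ x + (DG (j x)).comp jL) x :=
    (hasFDerivAt_norm_sq_div_two x).add ((hG (j x)).comp x jL.hasFDerivAt)
  exact convexOn_univ_of_hasFDerivAt_of_monotone hderiv
    (monotone_innerSL_add_of_semimonotone hsmall
      (semimonotone_comp_of_norm_le (j := jL) hj hμ hmon))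

/-- If `j : X → Y` is linear with `‖jx‖ ≤ C_P‖x‖`, `G : Y → ℝ` is differentiable with
semi-monotone derivative, `(DG(y₁) − DG(y₂))[y₁ − y₂] ≥ −μ‖y₁ − y₂‖²`, and `μ C_P² ≤ 1`,
then `F(x) = ½‖x‖² + G(jx)` is convex. -/
theorem convexity_of_regularized_energy
    {X Y : Type*} [NormedAddCommGroup X] [InnerProductSpace ℝ X]
    [NormedAddCommGroup Y] [InnerProductSpace ℝ Y]
    (j : X →ₗ[ℝ] Y) (C_P : ℝ) (hC_P : 0 ≤ C_P) (hj : ∀ x : X, ‖j x‖ ≤ C_P * ‖x‖)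
    (G : Y → ℝ) (DG : Y → (Y →L[ℝ] ℝ)) (hG : ∀ y, HasFDerivAt G (DG y) y)
    (μ : ℝ) (hμ : 0 ≤ μ)
    (hmon : ∀ y₁ y₂ : Y, (DG y₁ - DG y₂) (y₁ - y₂) ≥ -μ * ‖y₁ - y₂‖ ^ 2)
    (hsmall : μ * C_P ^ 2 ≤ 1) :
    ConvexOn ℝ Set.univ (fun x : X => ‖x‖ ^ 2 / 2 + G (j x)) :=
  convexity_of_regularized_energy_general j C_P hj G DG hG μ hμ hmon hsmall
end

section
/- Let d, m ≥ 1, α ∈ (0, 1], a ∈ (1, ∞), T > 0, and M, K ≥ 0, and set γ = α(a−1) / ((d/2 + α)·a). Let u : [0, T] × ℝ^d → ℝ^m and let v : [0, T] × ℝ^d → ℝ^m be measurable, and suppose: (i) for every t ∈ [0, T] and x, y ∈ ℝ^d, |u(t, x) − u(t, y)| ≤ M|x − y|^α; (ii) for every x ∈ ℝ^d and 0 ≤ s ≤ t ≤ T, u(t, x) − u(s, x) = ∫_s^t v(τ, x) dτ; and (iii) (∫₀^T (∫_{ℝ^d} |v(t, x)|² dx)^{a/2} dt)^{1/a} ≤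 K. Then there exists a constant C > 0 depending only on d, α and a such that for all s, t ∈ [0, T] and x, y ∈ ℝ^d: |u(t, x) − u(s, y)| ≤ C(M + K)(|t − s|^γ + |x − y|^α). -/
/-!
Fix `s < t` and a point `x`, and compare `u(t, x)` with `u(s, x)` through the averages of
`u(t, ·)` and `u(s, ·)` over the ball `B(x, r)`. Spatial Hölder continuity puts each value within
`M rᵅ` of its average. The two averages differ by at most `|B|⁻¹ ∫_B |u(t, ·) - u(s, ·)|`, and
writing `u(t, ·) - u(s, ·) = ∫ₛᵗ v`, Cauchy–Schwarz on `B` and Hölder in time bound this by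
`|B|^(-1/2) K (t - s)^(1 - 1/a) ~ r^(-d/2) K (t - s)^(1 - 1/a)`. The radius
`r = (t - s)^(γ/α)` makes both terms of order `(t - s)^γ`; a change of `x` costs only `M |x - y|ᵅ`.
-/

open MeasureTheory Metric Set Filter Topology
open scoped ENNReal

theorem continuous_of_norm_sub_le_mul_rpow {E F : Type*} [SeminormedAddCommGroup E]
    [SeminormedAddCommGroup F] {f : E → F} {M α : ℝ} (hα : 0 < α)
    (h : ∀ x y, ‖f x - f y‖ ≤ M * ‖x - y‖ ^ α) : Continuous f := by
  refine continuous_iff_continuousAt.2 fun x => tendsto_iff_norm_sub_tendsto_zero.2 ?_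
  have hlim : Tendsto (fun y => M * ‖y - x‖ ^ α) (𝓝 x) (𝓝 (M * ‖x - x‖ ^ α)) :=
    (((continuous_id.sub continuous_const).norm.rpow_const fun _ => Or.inr hα.le).const_mul
      M).tendsto x
  rw [sub_self, norm_zero, Real.zero_rpow hα.ne', mul_zero] at hlim
  exact squeeze_zero (fun _ => norm_nonneg _) (fun y => h y x) hlim

section SetAverage

variable {X F : Type*} [MeasurableSpace X] [NormedAddCommGroup F] [NormedSpace ℝ F]
  {μ : Measure X} {s : Set X} {f g : X → F}

theorem norm_setAverage_le_of_forall_norm_le {C : ℝ} (hs₀ : μ s ≠ 0) (hs : μ s ≠ ∞)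
    (hC : ∀ y ∈ s, ‖f y‖ ≤ C) : ‖⨍ y in s, f y ∂μ‖ ≤ C := by
  have hpos : 0 < μ.real s := ENNReal.toReal_pos hs₀ hs
  rw [setAverage_eq, norm_smul, Real.norm_of_nonneg (inv_nonneg.2 hpos.le)]
  calc (μ.real s)⁻¹ * ‖∫ y in s, f y ∂μ‖ ≤ (μ.real s)⁻¹ * (C * μ.real s) := by
        gcongr; exact norm_setIntegral_le_of_norm_le_const hs.lt_top hC
    _ = C := by field_simp

theorem norm_sub_setAverage_le [CompleteSpace F] {c : F} {C : ℝ} (hs₀ : μ s ≠ 0) (hs : μ s ≠ ∞)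
    (hf : IntegrableOn f s μ) (hC : ∀ y ∈ s, ‖c - f y‖ ≤ C) :
    ‖c - ⨍ y in s, f y ∂μ‖ ≤ C := by
  have hpos : 0 < μ.real s := ENNReal.toReal_pos hs₀ hs
  have hc : c - ⨍ y in s, f y ∂μ = ⨍ y in s, (c - f y) ∂μ := by
    rw [setAverage_eq, setAverage_eq, integral_sub (integrableOn_const (C := c) hs) hf,
      setIntegral_const, smul_sub, smul_smul, inv_mul_cancel₀ hpos.ne', one_smul]
  exact hc ▸ norm_setAverage_le_of_forall_norm_le hs₀ hs hC

theorem norm_setAverage_sub_setAverage_le (hf : IntegrableOn f s μ) (hg : IntegrableOn g s μ) :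
    ‖(⨍ y in s, f y ∂μ) - ⨍ y in s, g y ∂μ‖ ≤ ⨍ y in s, ‖f y - g y‖ ∂μ := by
  rw [setAverage_eq, setAverage_eq, setAverage_eq, ← smul_sub, ← integral_sub hf hg, norm_smul,
    Real.norm_of_nonneg (by positivity), smul_eq_mul]
  gcongr
  exact norm_integral_le_integral_norm _

theorem norm_sub_le_two_mul_add_setAverage_norm_sub [CompleteSpace F] {x : X} {C : ℝ}
    (hs₀ : μ s ≠ 0) (hs : μ s ≠ ∞) (hf : IntegrableOn f s μ) (hg : IntegrableOn g s μ)
    (hfC : ∀ y ∈ s, ‖f x - f y‖ ≤ C) (hgC : ∀ y ∈ s, ‖g x - g y‖ ≤ C) :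
    ‖f x - g x‖ ≤ 2 * C + ⨍ y in s, ‖f y - g y‖ ∂μ := by
  set A := ⨍ y in s, f y ∂μ
  set B := ⨍ y in s, g y ∂μ
  calc ‖f x - g x‖ = ‖(f x - A) + (A - B) - (g x - B)‖ := by congr 1; abel
    _ ≤ ‖f x - A‖ + ‖A - B‖ + ‖g x - B‖ := norm_sub_le_of_le (norm_add_le _ _) le_rfl
    _ ≤ C + ⨍ y in s, ‖f y - g y‖ ∂μ + C := by
        gcongr
        exacts [norm_sub_setAverage_le hs₀ hs hf hfC, norm_setAverage_sub_setAverage_le hf hg,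
          norm_sub_setAverage_le hs₀ hs hg hgC]
    _ = 2 * C + ⨍ y in s, ‖f y - g y‖ ∂μ := by ring

end SetAverage

section Lebesgue

variable {X F : Type*} [MeasurableSpace X] [NormedAddCommGroup F] {μ : Measure X}

theorem lintegral_enorm_sub_le_of_eq_intervalIntegral [NormedSpace ℝ F] [MeasurableSpace F]
    [OpensMeasurableSpace F] [SFinite μ] {u v : ℝ → X → F} (hv : Measurable (Function.uncurry v))
    {s t : ℝ} (hst : s ≤ t) (huv : ∀ y, u t y - u s y = ∫ τ in s..t, v τ y) :
    ∫⁻ y, ‖u t y - u s y‖ₑ ∂μ ≤ ∫⁻ τ in Ioc s t, (∫⁻ y, ‖v τ y‖ₑ ∂μ) :=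
  calc ∫⁻ y, ‖u t y - u s y‖ₑ ∂μ ≤ ∫⁻ y, (∫⁻ τ in Ioc s t, ‖v τ y‖ₑ) ∂μ :=
        lintegral_mono fun y => by
          rw [huv, intervalIntegral.integral_of_le hst]
          exact enorm_integral_le_lintegral_enorm _
    _ = ∫⁻ τ in Ioc s t, (∫⁻ y, ‖v τ y‖ₑ ∂μ) :=
        lintegral_lintegral_swap (hv.enorm.comp measurable_swap).aemeasurable

theorem setLIntegral_le_setLIntegral_rpow_mul_measure {f : X → ℝ≥0∞} {s : Set X}
    (hf : AEMeasurable f (μ.restrict s)) {p : ℝ} (hp : 1 < p) :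
    ∫⁻ x in s, f x ∂μ ≤ (∫⁻ x in s, f x ^ p ∂μ) ^ (1 / p) * μ s ^ (1 - 1 / p) := by
  have h := ENNReal.lintegral_mul_le_Lp_mul_Lq (μ.restrict s) (Real.HolderConjugate.conjExponent hp)
    hf (aemeasurable_const (b := 1))
  simp only [Pi.mul_apply, mul_one, ENNReal.one_rpow, setLIntegral_one] at h
  refine h.trans_eq ?_
  congr 2
  rw [Real.conjExponent]
  field_simp

theorem setLIntegral_enorm_le_eLpNorm_two_mul_measure [MeasurableSpace F]
    [OpensMeasurableSpace F] {f : X → F} (hf : AEMeasurable f μ) (s : Set X) :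
    ∫⁻ y in s, ‖f y‖ₑ ∂μ ≤ eLpNorm f 2 μ * μ s ^ (1 / 2 : ℝ) := by
  refine (setLIntegral_le_setLIntegral_rpow_mul_measure hf.enorm.restrict one_lt_two).trans ?_
  rw [eLpNorm_eq_lintegral_rpow_enorm_toReal two_ne_zero ENNReal.ofNat_ne_top]
  norm_num
  gcongr
  exact Measure.restrict_le_self

theorem measurable_eLpNorm_of_measurable_uncurry {Y : Type*} [MeasurableSpace Y]
    [MeasurableSpace F] [OpensMeasurableSpace F] [SFinite μ] {v : Y → X → F}
    (hv : Measurable (Function.uncurry v)) {p : ℝ≥0∞} (hp₀ : p ≠ 0) (hp : p ≠ ∞) :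
    Measurable fun τ => eLpNorm (v τ) p μ := by
  simp_rw [eLpNorm_eq_lintegral_rpow_enorm_toReal hp₀ hp]
  exact ((hv.enorm.pow_const _).lintegral_prod_right').pow_const _

end Lebesgue

section TimeDerivative

variable {X F : Type*} [MeasurableSpace X] [NormedAddCommGroup F] {μ : Measure X}

/-- `v` is the time derivative of `u` on `[0, T]` and `‖v‖_{Lᵃ(0, T; L²(μ))} ≤ K`. -/
structure TimeDerivBound [NormedSpace ℝ F] [MeasurableSpace F] (u v : ℝ → X → F) (μ : Measure X)
    (T a K : ℝ) : Prop where
  measurable : Measurable (Function.uncurry v)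
  sub_eq_intervalIntegral :
    ∀ x, ∀ s t : ℝ, 0 ≤ s → s ≤ t → t ≤ T → u t x - u s x = ∫ τ in s..t, v τ x
  integrable_sq : ∀ t ∈ Icc 0 T, Integrable (fun x => ‖v t x‖ ^ 2) μ
  integrableOn_rpow : IntegrableOn (fun t => (∫ x, ‖v t x‖ ^ 2 ∂μ) ^ (a / 2)) (Icc 0 T)
  rpow_integral_le : (∫ t in (0:ℝ)..T, (∫ x, ‖v t x‖ ^ 2 ∂μ) ^ (a / 2)) ^ (1 / a) ≤ K

theorem eLpNorm_two_eq_ofReal_integral_sq {f : X → F} (hf : Integrable (fun x => ‖f x‖ ^ 2) μ) :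
    eLpNorm f 2 μ = ENNReal.ofReal (∫ x, ‖f x‖ ^ 2 ∂μ) ^ (1 / 2 : ℝ) := by
  rw [eLpNorm_eq_lintegral_rpow_enorm_toReal two_ne_zero ENNReal.ofNat_ne_top,
    ofReal_integral_eq_lintegral_ofReal hf (Eventually.of_forall fun _ => by positivity)]
  simp_rw [ENNReal.toReal_ofNat, ENNReal.rpow_two, ← ofReal_norm,
    ENNReal.ofReal_pow (norm_nonneg _)]

namespace TimeDerivBound

variable [NormedSpace ℝ F] [MeasurableSpace F] {u v : ℝ → X → F} {T a K : ℝ}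

theorem setLIntegral_eLpNorm_rpow_le (h : TimeDerivBound u v μ T a K) (ha : 0 < a)
    (hT : 0 ≤ T) : ∫⁻ t in Icc 0 T, eLpNorm (v t) 2 μ ^ a ≤ ENNReal.ofReal K ^ a := by
  have hK := h.rpow_integral_le
  set G : ℝ → ℝ := fun t => ∫ x, ‖v t x‖ ^ 2 ∂μ
  have hG : ∀ t, 0 ≤ G t := fun t => integral_nonneg fun x => by positivity
  set J := ∫ t in (0:ℝ)..T, G t ^ (a / 2) with hJdef
  have hJ : 0 ≤ J := intervalIntegral.integral_nonneg hT fun t _ => by positivity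
  have hJK : J ≤ K ^ a := by
    rw [one_div, Real.rpow_inv_le_iff_of_pos hJ ((Real.rpow_nonneg hJ _).trans hK) ha] at hK
    exact hK
  calc ∫⁻ t in Icc 0 T, eLpNorm (v t) 2 μ ^ a
      = ∫⁻ t in Icc 0 T, ENNReal.ofReal (G t ^ (a / 2)) := by
        refine setLIntegral_congr_fun measurableSet_Icc fun t ht => ?_
        rw [eLpNorm_two_eq_ofReal_integral_sq (h.integrable_sq t ht), ← ENNReal.rpow_mul,
          ENNReal.ofReal_rpow_of_nonneg (hG t) (by positivity)]
        ring_nf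
    _ = ENNReal.ofReal J := by
        rw [hJdef, ← ofReal_integral_eq_lintegral_ofReal h.integrableOn_rpow
            (Eventually.of_forall fun t => by positivity),
          intervalIntegral.integral_of_le hT, integral_Icc_eq_integral_Ioc]
    _ ≤ ENNReal.ofReal K ^ a := by
        rw [ENNReal.ofReal_rpow_of_nonneg ((Real.rpow_nonneg hJ _).trans hK) ha.le]
        exact ENNReal.ofReal_le_ofReal hJK

theorem setLIntegral_enorm_sub_le [OpensMeasurableSpace F] [SFinite μ]
    (h : TimeDerivBound u v μ T a K) (ha : 1 < a)
    {s t : ℝ} (hs : 0 ≤ s) (hst : s ≤ t) (ht : t ≤ T) (B : Set X) :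
    ∫⁻ y in B, ‖u t y - u s y‖ₑ ∂μ ≤
      μ B ^ (1 / 2 : ℝ) * ENNReal.ofReal K * ENNReal.ofReal (t - s) ^ (1 - 1 / a) := by
  have ha₀ : 0 < a := one_pos.trans ha
  set N : ℝ → ℝ≥0∞ := fun τ => eLpNorm (v τ) 2 μ
  have hN : Measurable N :=
    measurable_eLpNorm_of_measurable_uncurry h.measurable two_ne_zero ENNReal.ofNat_ne_top
  have hNa : (∫⁻ τ in Ioc s t, N τ ^ a) ^ (1 / a) ≤ ENNReal.ofReal K := by
    calc (∫⁻ τ in Ioc s t, N τ ^ a) ^ (1 / a)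
        ≤ (∫⁻ τ in Icc 0 T, N τ ^ a) ^ (1 / a) := by
          gcongr
          exact fun τ hτ => ⟨hs.trans hτ.1.le, hτ.2.trans ht⟩
      _ ≤ (ENNReal.ofReal K ^ a) ^ (1 / a) := by
          gcongr
          exact h.setLIntegral_eLpNorm_rpow_le ha₀ (hs.trans (hst.trans ht))
      _ = ENNReal.ofReal K := by
          rw [← ENNReal.rpow_mul, mul_one_div_cancel ha₀.ne', ENNReal.rpow_one]
  calc ∫⁻ y in B, ‖u t y - u s y‖ₑ ∂μ
      ≤ ∫⁻ τ in Ioc s t, (∫⁻ y in B, ‖v τ y‖ₑ ∂μ) :=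
        lintegral_enorm_sub_le_of_eq_intervalIntegral h.measurable hst
          (h.sub_eq_intervalIntegral · s t hs hst ht)
    _ ≤ ∫⁻ τ in Ioc s t, N τ * μ B ^ (1 / 2 : ℝ) :=
        lintegral_mono fun τ => setLIntegral_enorm_le_eLpNorm_two_mul_measure
          (h.measurable.comp measurable_prodMk_left).aemeasurable B
    _ = (∫⁻ τ in Ioc s t, N τ) * μ B ^ (1 / 2 : ℝ) := lintegral_mul_const _ hN
    _ ≤ (ENNReal.ofReal K * ENNReal.ofReal (t - s) ^ (1 - 1 / a)) * μ B ^ (1 / 2 : ℝ) := by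
        gcongr
        refine (setLIntegral_le_setLIntegral_rpow_mul_measure hN.aemeasurable ha).trans ?_
        rw [Real.volume_Ioc]
        gcongr
    _ = μ B ^ (1 / 2 : ℝ) * ENNReal.ofReal K * ENNReal.ofReal (t - s) ^ (1 - 1 / a) := by ring

theorem setAverage_norm_sub_le [OpensMeasurableSpace F] [SFinite μ]
    (h : TimeDerivBound u v μ T a K) (ha : 1 < a) (hK₀ : 0 ≤ K)
    {s t : ℝ} (hs : 0 ≤ s) (hst : s ≤ t) (ht : t ≤ T) {B : Set X} (hB₀ : μ B ≠ 0) (hB : μ B ≠ ∞)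
    (hmeas : AEStronglyMeasurable (fun y => u t y - u s y) (μ.restrict B)) :
    ⨍ y in B, ‖u t y - u s y‖ ∂μ ≤ μ.real B ^ (-(1 / 2) : ℝ) * K * (t - s) ^ (1 - 1 / a) := by
  have hpos : 0 < μ.real B := ENNReal.toReal_pos hB₀ hB
  have hL1 := ENNReal.toReal_mono (ENNReal.mul_ne_top (ENNReal.mul_ne_top
      (ENNReal.rpow_ne_top_of_nonneg (by norm_num) hB) ENNReal.ofReal_ne_top)
      (ENNReal.rpow_ne_top_of_nonneg (by bound) ENNReal.ofReal_ne_top))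
    (h.setLIntegral_enorm_sub_le ha hs hst ht B)
  rw [ENNReal.toReal_mul, ENNReal.toReal_mul, ← ENNReal.toReal_rpow, ← ENNReal.toReal_rpow,
    ENNReal.toReal_ofReal hK₀, ENNReal.toReal_ofReal (sub_nonneg.2 hst),
    ← integral_norm_eq_lintegral_enorm hmeas, ← measureReal_def] at hL1
  have hpow : μ.real B ^ (-(1 / 2) : ℝ) = (μ.real B)⁻¹ * μ.real B ^ (1 / 2 : ℝ) := by
    rw [← Real.rpow_neg_one, ← Real.rpow_add hpos]
    norm_num
  rw [setAverage_eq, smul_eq_mul, hpow]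
  exact (mul_le_mul_of_nonneg_left hL1 (by positivity)).trans_eq (by ring)

end TimeDerivBound

end TimeDerivative

section HaarSpace

variable {E F : Type*} [NormedAddCommGroup E] [NormedSpace ℝ E] [FiniteDimensional ℝ E]
  [MeasurableSpace E] [BorelSpace E] {μ : Measure E} [μ.IsAddHaarMeasure]
  [NormedAddCommGroup F] [NormedSpace ℝ F] [CompleteSpace F] [MeasurableSpace F]
  [OpensMeasurableSpace F]

theorem norm_sub_le_of_radius_pos {u v : ℝ → E → F} {T M K a α : ℝ} (ha : 1 < a) (hα : 0 < α)
    (hM : 0 ≤ M) (hK₀ : 0 ≤ K)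
    (hu : ∀ t ∈ Icc 0 T, ∀ x y, ‖u t x - u t y‖ ≤ M * ‖x - y‖ ^ α)
    (hD : TimeDerivBound u v μ T a K)
    {s t : ℝ} (hs : 0 ≤ s) (hst : s ≤ t) (ht : t ≤ T) (x : E) {r : ℝ} (hr : 0 < r) :
    ‖u t x - u s x‖ ≤ 2 * (M * r ^ α) + μ.real (ball 0 1) ^ (-(1 / 2) : ℝ) * K *
      (r ^ (-(Module.finrank ℝ E : ℝ) / 2) * (t - s) ^ (1 - 1 / a)) := by
  have hs' : s ∈ Icc 0 T := ⟨hs, hst.trans ht⟩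
  have ht' : t ∈ Icc 0 T := ⟨hs.trans hst, ht⟩
  have hcont : ∀ τ ∈ Icc 0 T, Continuous (u τ) :=
    fun τ hτ => continuous_of_norm_sub_le_mul_rpow hα (hu τ hτ)
  have hint : ∀ τ ∈ Icc 0 T, IntegrableOn (u τ) (ball x r) μ := fun τ hτ =>
    ((hcont τ hτ).continuousOn.integrableOn_compact (isCompact_closedBall x r)).mono_set
      ball_subset_closedBall
  have hosc : ∀ τ ∈ Icc 0 T, ∀ y ∈ ball x r, ‖u τ x - u τ y‖ ≤ M * r ^ α := fun τ hτ y hy =>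
    (hu τ hτ x y).trans (by gcongr; exact (mem_ball_iff_norm'.1 hy).le)
  have hball : μ.real (ball x r) = r ^ Module.finrank ℝ E * μ.real (ball 0 1) := by
    rw [measureReal_def, Measure.addHaar_ball_of_pos μ x hr, ENNReal.toReal_mul,
      ENNReal.toReal_ofReal (by positivity), measureReal_def]
  have hc : 0 < μ.real (ball (0 : E) 1) :=
    ENNReal.toReal_pos (measure_ball_pos μ 0 one_pos).ne' measure_ball_lt_top.ne
  calc ‖u t x - u s x‖ ≤ 2 * (M * r ^ α) + ⨍ y in ball x r, ‖u t y - u s y‖ ∂μ :=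
        norm_sub_le_two_mul_add_setAverage_norm_sub (measure_ball_pos μ x hr).ne'
          measure_ball_lt_top.ne (hint t ht') (hint s hs') (hosc t ht') (hosc s hs')
    _ ≤ 2 * (M * r ^ α) + μ.real (ball x r) ^ (-(1 / 2) : ℝ) * K * (t - s) ^ (1 - 1 / a) := by
        gcongr
        exact hD.setAverage_norm_sub_le ha hK₀ hs hst ht
          (measure_ball_pos μ x hr).ne' measure_ball_lt_top.ne
          ((hcont t ht').sub (hcont s hs')).aestronglyMeasurable
    _ = _ := by
        rw [hball, Real.mul_rpow (by positivity) hc.le, ← Real.rpow_natCast,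
          ← Real.rpow_mul hr.le]
        ring_nf

theorem norm_sub_le_mul_rpow_of_le {u v : ℝ → E → F} {T M K a α : ℝ} (ha : 1 < a) (hα : 0 < α)
    (hM : 0 ≤ M) (hK₀ : 0 ≤ K)
    (hu : ∀ t ∈ Icc 0 T, ∀ x y, ‖u t x - u t y‖ ≤ M * ‖x - y‖ ^ α)
    (hD : TimeDerivBound u v μ T a K)
    {s t : ℝ} (hs : 0 ≤ s) (hst : s ≤ t) (ht : t ≤ T) (x : E) :
    ‖u t x - u s x‖ ≤ (2 + μ.real (ball 0 1) ^ (-(1 / 2) : ℝ)) * (M + K) *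
      (t - s) ^ (α * (a - 1) / (((Module.finrank ℝ E : ℝ) / 2 + α) * a)) := by
  set d : ℝ := (Module.finrank ℝ E : ℝ)
  have hd : 0 ≤ d := Nat.cast_nonneg _
  set c : ℝ := μ.real (ball (0 : E) 1) ^ (-(1 / 2) : ℝ)
  set γ := α * (a - 1) / ((d / 2 + α) * a) with hγ_def
  have ha₀ : a ≠ 0 := by positivity
  have hγ : 0 < γ := div_pos (mul_pos hα (by linarith)) (by positivity)
  rcases hst.eq_or_lt with rfl | hlt
  · simp [Real.zero_rpow hγ.ne']
  set δ := t - s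
  have hδ : 0 < δ := sub_pos.2 hlt
  -- the radius balancing `M r ^ α` against `K r ^ (-d/2) δ ^ (1 - 1/a)`
  set r := δ ^ ((a - 1) / ((d / 2 + α) * a))
  have hrα : r ^ α = δ ^ γ := by
    rw [← Real.rpow_mul hδ.le, hγ_def]
    ring_nf
  have hrd : r ^ (-d / 2) * δ ^ (1 - 1 / a) = δ ^ γ := by
    rw [← Real.rpow_mul hδ.le, ← Real.rpow_add hδ, hγ_def]
    congr 1
    field_simp
    ring
  have h := norm_sub_le_of_radius_pos ha hα hM hK₀ hu hD hs hst ht x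
    (Real.rpow_pos_of_pos hδ _ : 0 < r)
  rw [hrα, hrd] at h
  have hc : 0 ≤ c := Real.rpow_nonneg measureReal_nonneg _
  calc ‖u t x - u s x‖ ≤ (2 * M + c * K) * δ ^ γ := h.trans_eq (by ring)
    _ ≤ (2 + c) * (M + K) * δ ^ γ := by gcongr; nlinarith [mul_nonneg hc hM]

end HaarSpace

theorem joint_spacetime_holder_general (d m : ℕ)
    (α a : ℝ) (hα : 0 < α) (ha : 1 < a) :
    ∃ C : ℝ, 0 < C ∧
      ∀ (T M K : ℝ), 0 < T → 0 ≤ M → 0 ≤ K →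
      ∀ (u v : ℝ → EuclideanSpace ℝ (Fin d) → EuclideanSpace ℝ (Fin m)),
        Measurable (Function.uncurry v) →
        -- (i) uniform spatial Hölder continuity
        (∀ t ∈ Set.Icc (0:ℝ) T, ∀ x y, ‖u t x - u t y‖ ≤ M * ‖x - y‖ ^ α) →
        -- (ii) `v` is the time derivative of `u`
        (∀ x, ∀ s t : ℝ, 0 ≤ s → s ≤ t → t ≤ T →
          u t x - u s x = ∫ τ in s..t, v τ x) →
        -- integrability of `v`
        (∀ t ∈ Set.Icc (0:ℝ) T, Integrable (fun x => ‖v t x‖ ^ 2)) →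
        IntegrableOn (fun t => (∫ x, ‖v t x‖ ^ 2) ^ (a / 2)) (Set.Icc 0 T) →
        -- (iii) the `Lᵃ(L²)` bound
        (∫ t in (0:ℝ)..T, (∫ x, ‖v t x‖ ^ 2) ^ (a / 2)) ^ (1 / a) ≤ K →
        ∀ s ∈ Set.Icc (0:ℝ) T, ∀ t ∈ Set.Icc (0:ℝ) T,
          ∀ x y : EuclideanSpace ℝ (Fin d),
            ‖u t x - u s y‖ ≤ C * (M + K) *
              (|t - s| ^ (α * (a - 1) / (((d : ℝ) / 2 + α) * a)) + ‖x - y‖ ^ α) := by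
  set c := volume.real (ball (0 : EuclideanSpace ℝ (Fin d)) 1) ^ (-(1 / 2) : ℝ)
  have hc : 0 ≤ c := Real.rpow_nonneg measureReal_nonneg _
  refine ⟨2 + c, by positivity, ?_⟩
  intro T M K _ hM hK u v hv hu huv hv₂ hva hKv s hs t ht x y
  wlog hst : s ≤ t generalizing s t x y
  · simpa only [norm_sub_rev, abs_sub_comm] using this t ht s hs y x (le_of_not_ge hst)
  have htime := norm_sub_le_mul_rpow_of_le ha hα hM hK hu ⟨hv, huv, hv₂, hva, hKv⟩ hs.1 hst ht.2 x
  rw [finrank_euclideanSpace_fin] at htime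
  have hM' : M ≤ (2 + c) * (M + K) := by nlinarith [mul_nonneg hc hM]
  calc ‖u t x - u s y‖ ≤ ‖u t x - u s x‖ + ‖u s x - u s y‖ :=
        norm_sub_le_norm_sub_add_norm_sub _ _ _
    _ ≤ (2 + c) * (M + K) * |t - s| ^ (α * (a - 1) / (((d : ℝ) / 2 + α) * a)) +
          (2 + c) * (M + K) * ‖x - y‖ ^ α := by
        rw [abs_of_nonneg (sub_nonneg.2 hst)]
        gcongr
        exact (hu s hs x y).trans (by gcongr)
    _ = _ := by ring

/-- A function on `[0,T] × ℝ^d` that is uniformly `α`-Hölder in space and whose time derivative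
lies in `Lᵃ(0,T; L²(ℝ^d))` is jointly Hölder continuous:
`|u(t,x) − u(s,y)| ≤ C(M + K)(|t − s|^γ + |x − y|^α)` with
`γ = α(a−1)/((d/2+α)a)` and `C = C(d, α, a)`. -/
theorem joint_spacetime_holder (d m : ℕ) (hd : 1 ≤ d) (hm : 1 ≤ m)
    (α a : ℝ) (hα : 0 < α) (hα1 : α ≤ 1) (ha : 1 < a) :
    ∃ C : ℝ, 0 < C ∧
      ∀ (T M K : ℝ), 0 < T → 0 ≤ M → 0 ≤ K →
      ∀ (u v : ℝ → EuclideanSpace ℝ (Fin d) → EuclideanSpace ℝ (Fin m)),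
        Measurable (Function.uncurry v) →
        -- (i) uniform spatial Hölder continuity
        (∀ t ∈ Set.Icc (0:ℝ) T, ∀ x y, ‖u t x - u t y‖ ≤ M * ‖x - y‖ ^ α) →
        -- (ii) `v` is the time derivative of `u`
        (∀ x, ∀ s t : ℝ, 0 ≤ s → s ≤ t → t ≤ T →
          u t x - u s x = ∫ τ in s..t, v τ x) →
        -- integrability of `v`
        (∀ t ∈ Set.Icc (0:ℝ) T, Integrable (fun x => ‖v t x‖ ^ 2)) →
        IntegrableOn (fun t => (∫ x, ‖v t x‖ ^ 2) ^ (a / 2)) (Set.Icc 0 T) →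
        -- (iii) the `Lᵃ(L²)` bound
        (∫ t in (0:ℝ)..T, (∫ x, ‖v t x‖ ^ 2) ^ (a / 2)) ^ (1 / a) ≤ K →
        ∀ s ∈ Set.Icc (0:ℝ) T, ∀ t ∈ Set.Icc (0:ℝ) T,
          ∀ x y : EuclideanSpace ℝ (Fin d),
            ‖u t x - u s y‖ ≤ C * (M + K) *
              (|t - s| ^ (α * (a - 1) / (((d : ℝ) / 2 + α) * a)) + ‖x - y‖ ^ α) :=
  joint_spacetime_holder_general d m α a hα ha
end
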